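/- arXiv:1808.05517 — 3 statements merged into one kernel-verified Lean document; each statement's English description precedes it below -/
import Mathlib

section
/- Let W : Fin n_o → Fin n_i → Fin k_h → Fin k_w → ℝ be a real 4-dimensional tensor, let T be a natural number, let P : Fin T → Fin n_o → Fin n_i → ℝ and D : Fin T → Fin n_i → Fin k_h → Fin k_w → ℝ, and let x : Fin n_i → Fin k_h → Fin k_w → ℝ be any input patch. Define y o = ∑_{i,h,w} W o i h w * x i h w and y' o = ∑_{k : Fin T} ∑_{i} P k o i * (∑_{h,w} D k i h w * x i h w). Then ∑_{o} (y o − y' o)^2 ≤ n_i * ∑_{o} ∑_{i} (∑_{h,w} (W o i h w − ∑_{k : Fin T} P k o i * D k i h w)^2) * (∑_{h,w} (x i h w)^2). (The squared response error of a T-term depthwise separable approximation is controlled by the Frobenius reconstruction error of the kernel times the patch energy.) -/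
/-- The squared response error of a `T`-term DW+PW depthwise separable
approximation is controlled by the Frobenius reconstruction error of the
kernel times the patch energy. -/
theorem dw_pw_response_error_bound
    (n_o n_i k_h k_w T : ℕ)
    (W : Fin n_o → Fin n_i → Fin k_h → Fin k_w → ℝ)
    (P : Fin T → Fin n_o → Fin n_i → ℝ)
    (D : Fin T → Fin n_i → Fin k_h → Fin k_w → ℝ)
    (x : Fin n_i → Fin k_h → Fin k_w → ℝ)
    (y y' : Fin n_o → ℝ)
    (hy : ∀ o, y o = ∑ i : Fin n_i, ∑ h : Fin k_h, ∑ w : Fin k_w, W o i h w * x i h w)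
    (hy' : ∀ o, y' o = ∑ k : Fin T, ∑ i : Fin n_i,
        P k o i * (∑ h : Fin k_h, ∑ w : Fin k_w, D k i h w * x i h w)) :
    (∑ o : Fin n_o, (y o - y' o) ^ 2)
      ≤ (n_i : ℝ) * ∑ o : Fin n_o, ∑ i : Fin n_i,
          (∑ h : Fin k_h, ∑ w : Fin k_w,
              (W o i h w - ∑ k : Fin T, P k o i * D k i h w) ^ 2)
            * (∑ h : Fin k_h, ∑ w : Fin k_w, (x i h w) ^ 2) := by
  rw [Finset.mul_sum]
  apply Finset.sum_le_sum
  intro o _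
  have hdiff : y o - y' o = ∑ i : Fin n_i, ∑ h : Fin k_h, ∑ w : Fin k_w,
      (W o i h w - ∑ k : Fin T, P k o i * D k i h w) * x i h w := by
    rw [hy, hy']
    simp only [sub_mul, Finset.sum_sub_distrib, Finset.mul_sum, Finset.sum_mul]
    congr 1
    rw [Finset.sum_comm]
    refine Finset.sum_congr rfl fun i _ => ?_
    rw [Finset.sum_comm]
    refine Finset.sum_congr rfl fun h _ => ?_
    rw [Finset.sum_comm]
    exact Finset.sum_congr rfl fun w _ => Finset.sum_congr rfl fun k _ => by ring
  rw [hdiff]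
  calc (∑ i : Fin n_i, ∑ h : Fin k_h, ∑ w : Fin k_w,
      (W o i h w - ∑ k : Fin T, P k o i * D k i h w) * x i h w) ^ 2
      ≤ (n_i : ℝ) * ∑ i : Fin n_i, (∑ h : Fin k_h, ∑ w : Fin k_w,
          (W o i h w - ∑ k : Fin T, P k o i * D k i h w) * x i h w) ^ 2 := by
        have := sq_sum_le_card_mul_sum_sq (s := (Finset.univ : Finset (Fin n_i)))
          (f := fun i => ∑ h : Fin k_h, ∑ w : Fin k_w,
            (W o i h w - ∑ k : Fin T, P k o i * D k i h w) * x i h w)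
        simpa using this
    _ ≤ (n_i : ℝ) * ∑ i : Fin n_i,
          (∑ h : Fin k_h, ∑ w : Fin k_w,
              (W o i h w - ∑ k : Fin T, P k o i * D k i h w) ^ 2)
            * (∑ h : Fin k_h, ∑ w : Fin k_w, (x i h w) ^ 2) := by
        apply mul_le_mul_of_nonneg_left _ (by positivity)
        apply Finset.sum_le_sum
        intro i _
        have := Finset.sum_mul_sq_le_sq_mul_sq (Finset.univ : Finset (Fin k_h × Fin k_w))
          (fun p => W o i p.1 p.2 - ∑ k : Fin T, P k o i * D k i p.1 p.2)
          (fun p => x i p.1 p.2)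
        simpa [Fintype.sum_prod_type] using this
end

section
/- Every real m × n matrix A of rank r admits a singular value decomposition into orthonormal rank-one components with the truncation-energy property: there exist nonnegative reals σ : Fin r → ℝ, an orthonormal family u : Fin r → Fin m → ℝ (orthonormal in the standard Euclidean inner product on Fin m → ℝ), and an orthonormal family v : Fin r → Fin n → ℝ, such that A a b = ∑_{k : Fin r} σ k * u k a * v k b for all a, b, and for every T ≤ r, the squared Frobenius norm of the residual after keeping the first T terms satisfies ∑_{a,b} (A a b − ∑_{k < T} σ k * u k a * v k b)^2 = ∑_{k ≥ T} (σ k)^2. -/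
/-!
Let `vᵢ` be an orthonormal eigenbasis of the positive semidefinite matrix `Aᵀ A`, with eigenvalues
`λᵢ ≥ 0`. Then `⟪A vᵢ, A vⱼ⟫ = λᵢ δᵢⱼ`, so the `A vᵢ` are pairwise orthogonal and `A vᵢ = 0` when
`λᵢ = 0`. Expanding `A = ∑ᵢ (A vᵢ) vᵢᵀ` and keeping the `rank A` indices with `λᵢ ≠ 0` gives
`A = ∑ σᵢ uᵢ vᵢᵀ` with `σᵢ = √λᵢ` and `uᵢ = A vᵢ / σᵢ` orthonormal.

The residual after truncation is the partial sum over the remaining indices, and for orthonormal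
`uₖ`, `vₖ` the squared Frobenius norm of `∑_{k ∈ s} σₖ uₖ vₖᵀ` is `∑_{k ∈ s} σₖ²`: the cross terms
factor as `σₖ σₗ ⟪uₖ, uₗ⟫ ⟪vₖ, vₗ⟫`.
-/

open Matrix Finset

variable {ι κ m n : Type*}

namespace OrthonormalBasis

variable [Fintype ι] [Fintype n] (B : OrthonormalBasis ι ℝ (EuclideanSpace ℝ n))

theorem dotProduct_apply [DecidableEq ι] (i j : ι) :
    ⇑(B i) ⬝ᵥ ⇑(B j) = if i = j then 1 else 0 := by
  rw [← orthonormal_iff_ite.mp B.orthonormal i j, EuclideanSpace.inner_eq_star_dotProduct,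
    dotProduct_comm]
  rfl

theorem sum_apply_mul_apply [DecidableEq n] (j b : n) :
    ∑ i, B i j * B i b = if j = b then 1 else 0 := by
  simpa [EuclideanSpace.inner_single_left, EuclideanSpace.inner_single_right, mul_comm]
    using B.sum_inner_mul_inner (EuclideanSpace.single b 1) (EuclideanSpace.single j 1)

end OrthonormalBasis

namespace Matrix

theorem apply_eq_sum_mulVec_mul [Fintype ι] [Fintype n] [DecidableEq n] (A : Matrix m n ℝ)
    (B : OrthonormalBasis ι ℝ (EuclideanSpace ℝ n)) (a : m) (b : n) :
    A a b = ∑ i, (A *ᵥ B i) a * B i b := by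
  simp only [mulVec, dotProduct, sum_mul, mul_assoc]
  rw [sum_comm]
  simp [← mul_sum, B.sum_apply_mul_apply]

theorem sum_sq_sum_mul_of_orthonormal [Fintype m] [Fintype n] [DecidableEq ι] (s : Finset ι)
    (σ : ι → ℝ) {u : ι → m → ℝ} {v : ι → n → ℝ}
    (hu : ∀ k k', ∑ a, u k a * u k' a = if k = k' then 1 else 0)
    (hv : ∀ k k', ∑ b, v k b * v k' b = if k = k' then 1 else 0) :
    ∑ a, ∑ b, (∑ k ∈ s, σ k * u k a * v k b) ^ 2 = ∑ k ∈ s, σ k ^ 2 := by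
  calc ∑ a, ∑ b, (∑ k ∈ s, σ k * u k a * v k b) ^ 2
      = ∑ k ∈ s, ∑ k' ∈ s, σ k * σ k' * ((∑ a, u k a * u k' a) * ∑ b, v k b * v k' b) := by
        simp_rw [sq, sum_mul_sum, mul_sum, sum_comm (s := (univ : Finset n)) (t := s),
          sum_comm (s := (univ : Finset m)) (t := s)]
        refine sum_congr rfl fun k _ ↦ sum_congr rfl fun k' _ ↦
          sum_congr rfl fun a _ ↦ sum_congr rfl fun b _ ↦ ?_
        ring
    _ = ∑ k ∈ s, σ k ^ 2 := by simp [hu, hv, sq]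

variable [Fintype m] [Fintype n]

structure IsSVD [Fintype ι] [DecidableEq ι] (A : Matrix m n ℝ) (σ : ι → ℝ) (u : ι → m → ℝ)
    (v : ι → n → ℝ) : Prop where
  nonneg : ∀ k, 0 ≤ σ k
  orthonormal_left : ∀ k k', ∑ a, u k a * u k' a = if k = k' then 1 else 0
  orthonormal_right : ∀ k k', ∑ b, v k b * v k' b = if k = k' then 1 else 0
  apply_eq_sum : ∀ a b, A a b = ∑ k, σ k * u k a * v k b

namespace IsSVD

variable [Fintype ι] [DecidableEq ι] {A : Matrix m n ℝ} {σ : ι → ℝ} {u : ι → m → ℝ}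
  {v : ι → n → ℝ}

theorem comp_equiv [Fintype κ] [DecidableEq κ] (h : A.IsSVD σ u v) (e : κ ≃ ι) :
    A.IsSVD (σ ∘ e) (u ∘ e) (v ∘ e) where
  nonneg k := h.nonneg (e k)
  orthonormal_left k k' := by simp [h.orthonormal_left, e.injective.eq_iff]
  orthonormal_right k k' := by simp [h.orthonormal_right, e.injective.eq_iff]
  apply_eq_sum a b := by simp [h.apply_eq_sum a b, ← e.sum_comp]

theorem sub_sum_filter (h : A.IsSVD σ u v) (p : ι → Prop) [DecidablePred p] (a : m) (b : n) :
    A a b - ∑ k with p k, σ k * u k a * v k b = ∑ k with ¬p k, σ k * u k a * v k b := by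
  rw [h.apply_eq_sum, ← sum_filter_add_sum_filter_not univ p, add_sub_cancel_left]

theorem sum_sq_sub_sum_filter (h : A.IsSVD σ u v) (p : ι → Prop) [DecidablePred p] :
    ∑ a, ∑ b, (A a b - ∑ k with p k, σ k * u k a * v k b) ^ 2 = ∑ k with ¬p k, σ k ^ 2 := by
  simp_rw [h.sub_sum_filter p]
  exact sum_sq_sum_mul_of_orthonormal _ σ h.orthonormal_left h.orthonormal_right

end IsSVD

theorem mulVec_dotProduct_mulVec_eigenvectorBasis [DecidableEq n] (A : Matrix m n ℝ) (i j : n) :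
    (A *ᵥ (isHermitian_conjTranspose_mul_self A).eigenvectorBasis i) ⬝ᵥ
        (A *ᵥ (isHermitian_conjTranspose_mul_self A).eigenvectorBasis j) =
      if i = j then (isHermitian_conjTranspose_mul_self A).eigenvalues i else 0 := by
  set hS := isHermitian_conjTranspose_mul_self A
  rw [← vecMul_transpose, ← dotProduct_mulVec, mulVec_mulVec,
    ← conjTranspose_eq_transpose_of_trivial, hS.mulVec_eigenvectorBasis, dotProduct_smul,
    hS.eigenvectorBasis.dotProduct_apply]
  split_ifs with h <;> simp [h]

theorem exists_isSVD_subtype_eigenvalues_ne_zero [DecidableEq n] (A : Matrix m n ℝ) :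
    ∃ σ u v, A.IsSVD (ι := {i // (isHermitian_conjTranspose_mul_self A).eigenvalues i ≠ 0})
      σ u v := by
  set hS := isHermitian_conjTranspose_mul_self A
  set B := hS.eigenvectorBasis
  have hpos (i : n) (hi : hS.eigenvalues i ≠ 0) : 0 < √(hS.eigenvalues i) :=
    Real.sqrt_pos.mpr ((eigenvalues_conjTranspose_mul_self_nonneg A i).lt_of_ne' hi)
  have hker (i : n) (hi : hS.eigenvalues i = 0) : A *ᵥ B i = 0 :=
    dotProduct_self_eq_zero.mp (by rw [mulVec_dotProduct_mulVec_eigenvectorBasis, if_pos rfl, hi])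
  refine ⟨fun i ↦ √(hS.eigenvalues i), fun i ↦ (√(hS.eigenvalues i))⁻¹ • A *ᵥ B i,
    fun i ↦ B i, ⟨fun i ↦ Real.sqrt_nonneg _, fun k k' ↦ ?_, fun k k' ↦ ?_, fun a b ↦ ?_⟩⟩
  · calc ∑ a, ((√(hS.eigenvalues k))⁻¹ • A *ᵥ B k) a * ((√(hS.eigenvalues k'))⁻¹ • A *ᵥ B k') a
        = (√(hS.eigenvalues k))⁻¹ * (√(hS.eigenvalues k'))⁻¹ * ((A *ᵥ B k) ⬝ᵥ (A *ᵥ B k')) := by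
          simp only [Pi.smul_apply, smul_eq_mul, dotProduct, mul_sum]
          exact sum_congr rfl fun a _ ↦ by ring
      _ = if k = k' then 1 else 0 := by
          rw [mulVec_dotProduct_mulVec_eigenvectorBasis]
          obtain rfl | h := eq_or_ne k k'
          · rw [if_pos rfl, if_pos rfl, ← mul_inv,
              Real.mul_self_sqrt (eigenvalues_conjTranspose_mul_self_nonneg A k),
              inv_mul_cancel₀ k.2]
          · simp [Subtype.coe_ne_coe.mpr h, h]
  · exact (B.dotProduct_apply k k').trans (by simp [Subtype.ext_iff])
  · rw [apply_eq_sum_mulVec_mul A B,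
      ← Fintype.sum_subtype_add_sum_subtype (fun i ↦ hS.eigenvalues i ≠ 0),
      Fintype.sum_eq_zero (fun i : {i // ¬hS.eigenvalues i ≠ 0} ↦ _)
        fun i ↦ by simp [hker i (not_not.mp i.2)],
      add_zero]
    exact sum_congr rfl fun i _ ↦ by
      rw [Pi.smul_apply, smul_eq_mul, mul_inv_cancel_left₀ (hpos i i.2).ne']

theorem exists_isSVD_fin_rank (A : Matrix m n ℝ) :
    ∃ (σ : Fin A.rank → ℝ) (u : Fin A.rank → m → ℝ) (v : Fin A.rank → n → ℝ), A.IsSVD σ u v := by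
  classical
  obtain ⟨σ, u, v, h⟩ := exists_isSVD_subtype_eigenvalues_ne_zero A
  have hcard : Fintype.card {i // (isHermitian_conjTranspose_mul_self A).eigenvalues i ≠ 0} =
      A.rank := by
    rw [← rank_conjTranspose_mul_self,
      (isHermitian_conjTranspose_mul_self A).rank_eq_card_non_zero_eigs]
  exact ⟨_, _, _, h.comp_equiv (Fintype.equivFinOfCardEq hcard).symm⟩

end Matrix

/-- Singular value decomposition of a real matrix into orthonormal rank-one
components, with the truncation-energy property. -/
theorem matrix_svd_truncation_energy
    (m n : ℕ) (A : Matrix (Fin m) (Fin n) ℝ) :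
    ∃ (σ : Fin A.rank → ℝ) (u : Fin A.rank → Fin m → ℝ)
      (v : Fin A.rank → Fin n → ℝ),
      (∀ k, 0 ≤ σ k) ∧
      (∀ k k' : Fin A.rank,
        (∑ a : Fin m, u k a * u k' a) = if k = k' then (1 : ℝ) else 0) ∧
      (∀ k k' : Fin A.rank,
        (∑ b : Fin n, v k b * v k' b) = if k = k' then (1 : ℝ) else 0) ∧
      (∀ (a : Fin m) (b : Fin n),
        A a b = ∑ k : Fin A.rank, σ k * u k a * v k b) ∧
      (∀ T : ℕ, T ≤ A.rank →
        (∑ a : Fin m, ∑ b : Fin n,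
            (A a b - ∑ k ∈ Finset.univ.filter (fun k : Fin A.rank => (k : ℕ) < T),
                σ k * u k a * v k b) ^ 2)
          = ∑ k ∈ Finset.univ.filter (fun k : Fin A.rank => T ≤ (k : ℕ)),
              (σ k) ^ 2) := by
  obtain ⟨σ, u, v, h⟩ := A.exists_isSVD_fin_rank
  refine ⟨σ, u, v, h.nonneg, h.orthonormal_left, h.orthonormal_right, h.apply_eq_sum,
    fun T _ ↦ ?_⟩
  simpa only [not_lt] using h.sum_sq_sub_sum_filter (fun k ↦ (k : ℕ) < T)
end

section
/- Let W : Fin n_o → Fin n_i → Fin k_h → Fin k_w → ℝ be a real 4-dimensional tensor, and for each input channel i let M_i be the n_o × (k_h·k_w) real matrix with entries M_i o (h, w) = W o i h w, with singular values σ_{i,1} ≥ σ_{i,2} ≥ … ≥ σ_{i,r_i} > 0 where r_i = rank M_i. Then for every natural number T, there exist families P : Fin T → Fin n_o → Fin n_i → ℝ and D : Fin T → Fin n_i → Fin k_h → Fin k_w → ℝ such that the squared Frobenius reconstruction error satisfies ∑_{o,i,h,w} (W o i h w − ∑_{k : Fin T} P k o i * D k i h w)^2 = ∑_{i} ∑_{k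 > T, k ≤ r_i} σ_{i,k}^2. (Truncating the decoupling of each slice to its top-T singular components gives a T-term depthwise separable approximation whose error is the total tail singular-value energy.) -/
/-!
Take the first `T` singular components of each slice, `σ_k u_k` as pointwise and `v_k` as
depthwise factor (zero beyond the rank). The residual of slice `i` is then the tail
`∑_{k ≥ T} σ_k u_k v_kᵀ`, and orthonormality of the `u_k` and of the `v_k` kills all cross
terms of its squared Frobenius norm, leaving `∑_{k ≥ T} σ_k²`.
-/

open Finset

theorem Fin.sum_dite_lt_eq_sum_filter_lt {M : Type*} [AddCommMonoid M] {r : ℕ} (T : ℕ)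
    (f : Fin r → M) :
    ∑ k : Fin T, (if h : (k : ℕ) < r then f ⟨k, h⟩ else 0)
      = ∑ k ∈ univ.filter (fun k : Fin r => (k : ℕ) < T), f k := by
  set g : ℕ → M := fun n => if h : n < r then f ⟨n, h⟩ else 0
  have hT : ∑ k : Fin T, g k = ∑ n ∈ (range T).filter (· < r), g n := by
    rw [Fin.sum_univ_eq_sum_range, sum_filter_of_ne]
    intro n _ hn
    by_contra hnr
    exact hn (dif_neg hnr)
  have hr : ∑ k ∈ univ.filter (fun k : Fin r => (k : ℕ) < T), f k
      = ∑ n ∈ (range r).filter (· < T), g n := by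
    rw [sum_filter, sum_filter, ← Fin.sum_univ_eq_sum_range (fun n => if n < T then g n else 0)]
    exact sum_congr rfl fun k _ => by simp [g]
  have hsupp : (range T).filter (· < r) = (range r).filter (· < T) := by
    ext n
    simp only [mem_filter, mem_range]
    omega
  rw [hT, hr, hsupp]

theorem Fin.sum_sub_sum_dite_lt {G : Type*} [AddCommGroup G] {r : ℕ} (T : ℕ) (f : Fin r → G) :
    ∑ k, f k - ∑ k : Fin T, (if h : (k : ℕ) < r then f ⟨k, h⟩ else 0)
      = ∑ k ∈ univ.filter (fun k : Fin r => T ≤ (k : ℕ)), f k := by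
  rw [sub_eq_iff_eq_add', ← sum_filter_add_sum_filter_not univ (fun k : Fin r => (k : ℕ) < T)]
  simp only [not_lt, Fin.sum_dite_lt_eq_sum_filter_lt]

theorem sum_sq_sum_mul_mul_of_orthonormal {R ι m n : Type*} [CommSemiring R]
    [Fintype m] [Fintype n] [DecidableEq ι] (S : Finset ι) (σ : ι → R) {u : ι → m → R}
    {v : ι → n → R} (hu : ∀ k k', u k ⬝ᵥ u k' = if k = k' then 1 else 0)
    (hv : ∀ k k', v k ⬝ᵥ v k' = if k = k' then 1 else 0) :
    ∑ o, ∑ p, (∑ k ∈ S, σ k * u k o * v k p) ^ 2 = ∑ k ∈ S, σ k ^ 2 := by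
  calc ∑ o, ∑ p, (∑ k ∈ S, σ k * u k o * v k p) ^ 2
      = ∑ k ∈ S, ∑ k' ∈ S, ∑ o, ∑ p, (σ k * u k o * v k p) * (σ k' * u k' o * v k' p) := by
        simp_rw [sq, sum_mul_sum, sum_comm (γ := n), sum_comm (γ := m)]
    _ = ∑ k ∈ S, ∑ k' ∈ S, σ k * σ k' * ((u k ⬝ᵥ u k') * (v k ⬝ᵥ v k')) := by
        simp_rw [dotProduct, sum_mul_sum, mul_sum]
        exact sum_congr rfl fun k _ => sum_congr rfl fun k' _ =>
          sum_congr rfl fun o _ => sum_congr rfl fun p _ => by ring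
    _ = ∑ k ∈ S, σ k ^ 2 := by
        simp [hu, hv, sq]

theorem dw_pw_truncated_svd_error_general
    (n_o n_i k_h k_w : ℕ)
    (W : Fin n_o → Fin n_i → Fin k_h → Fin k_w → ℝ)
    (M : Fin n_i → Matrix (Fin n_o) (Fin k_h × Fin k_w) ℝ)
    (hM : ∀ (i : Fin n_i) (o : Fin n_o) (h : Fin k_h) (w : Fin k_w),
      M i o (h, w) = W o i h w)
    (σ : ∀ i : Fin n_i, Fin (M i).rank → ℝ)
    (u : ∀ i : Fin n_i, Fin (M i).rank → Fin n_o → ℝ)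
    (v : ∀ i : Fin n_i, Fin (M i).rank → Fin k_h × Fin k_w → ℝ)
    (hu : ∀ (i : Fin n_i) (k k' : Fin (M i).rank),
      (∑ o : Fin n_o, u i k o * u i k' o) = if k = k' then (1 : ℝ) else 0)
    (hv : ∀ (i : Fin n_i) (k k' : Fin (M i).rank),
      (∑ p : Fin k_h × Fin k_w, v i k p * v i k' p) = if k = k' then (1 : ℝ) else 0)
    (hSVD : ∀ (i : Fin n_i) (o : Fin n_o) (p : Fin k_h × Fin k_w),
      M i o p = ∑ k : Fin (M i).rank, σ i k * u i k o * v i k p)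
    (T : ℕ) :
    ∃ (P : Fin T → Fin n_o → Fin n_i → ℝ)
      (D : Fin T → Fin n_i → Fin k_h → Fin k_w → ℝ),
      (∑ o : Fin n_o, ∑ i : Fin n_i, ∑ h : Fin k_h, ∑ w : Fin k_w,
          (W o i h w - ∑ k : Fin T, P k o i * D k i h w) ^ 2)
        = ∑ i : Fin n_i,
            ∑ k ∈ Finset.univ.filter (fun k : Fin (M i).rank => T ≤ (k : ℕ)),
              (σ i k) ^ 2 := by
  set P : Fin T → Fin n_o → Fin n_i → ℝ := fun k o i =>
    if h : (k : ℕ) < (M i).rank then σ i ⟨k, h⟩ * u i ⟨k, h⟩ o else 0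
  set D : Fin T → Fin n_i → Fin k_h → Fin k_w → ℝ := fun k i a b =>
    if h : (k : ℕ) < (M i).rank then v i ⟨k, h⟩ (a, b) else 0
  have residual : ∀ o i a b, W o i a b - ∑ k, P k o i * D k i a b
      = ∑ k ∈ univ.filter (fun k : Fin (M i).rank => T ≤ (k : ℕ)),
          σ i k * u i k o * v i k (a, b) := by
    intro o i a b
    rw [← hM, hSVD, ← Fin.sum_sub_sum_dite_lt]
    congr 2 with k
    simp only [P, D]
    split_ifs <;> simp [mul_assoc]
  refine ⟨P, D, ?_⟩
  calc _ = ∑ i, ∑ o, ∑ p : Fin k_h × Fin k_w,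
          (∑ k ∈ univ.filter (fun k : Fin (M i).rank => T ≤ (k : ℕ)),
            σ i k * u i k o * v i k p) ^ 2 := by
        simp_rw [residual, Fintype.sum_prod_type]
        exact sum_comm
    _ = _ := sum_congr rfl fun i _ => sum_sq_sum_mul_mul_of_orthonormal _ (σ i) (hu i) (hv i)

/-- Truncating the decoupling of each matricized slice of `W` to its top-`T`
singular components gives a `T`-term DW+PW depthwise separable approximation
whose squared Frobenius reconstruction error is the total tail
singular-value energy.

The singular values of each slice `M i` (in decreasing order) are encoded by
an SVD: positive decreasing `σ i` together with orthonormal families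
`u i`, `v i` such that `M i = ∑ k, σ i k • (u i k) ⬝ (v i k)ᵀ`. -/
theorem dw_pw_truncated_svd_error
    (n_o n_i k_h k_w : ℕ)
    (W : Fin n_o → Fin n_i → Fin k_h → Fin k_w → ℝ)
    (M : Fin n_i → Matrix (Fin n_o) (Fin k_h × Fin k_w) ℝ)
    (hM : ∀ (i : Fin n_i) (o : Fin n_o) (h : Fin k_h) (w : Fin k_w),
      M i o (h, w) = W o i h w)
    (σ : ∀ i : Fin n_i, Fin (M i).rank → ℝ)
    (u : ∀ i : Fin n_i, Fin (M i).rank → Fin n_o → ℝ)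
    (v : ∀ i : Fin n_i, Fin (M i).rank → Fin k_h × Fin k_w → ℝ)
    (hσpos : ∀ i k, 0 < σ i k)
    (hσdec : ∀ (i : Fin n_i) (k k' : Fin (M i).rank), k ≤ k' → σ i k' ≤ σ i k)
    (hu : ∀ (i : Fin n_i) (k k' : Fin (M i).rank),
      (∑ o : Fin n_o, u i k o * u i k' o) = if k = k' then (1 : ℝ) else 0)
    (hv : ∀ (i : Fin n_i) (k k' : Fin (M i).rank),
      (∑ p : Fin k_h × Fin k_w, v i k p * v i k' p) = if k = k' then (1 : ℝ) else 0)
    (hSVD : ∀ (i : Fin n_i) (o : Fin n_o) (p : Fin k_h × Fin k_w),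
      M i o p = ∑ k : Fin (M i).rank, σ i k * u i k o * v i k p)
    (T : ℕ) :
    ∃ (P : Fin T → Fin n_o → Fin n_i → ℝ)
      (D : Fin T → Fin n_i → Fin k_h → Fin k_w → ℝ),
      (∑ o : Fin n_o, ∑ i : Fin n_i, ∑ h : Fin k_h, ∑ w : Fin k_w,
          (W o i h w - ∑ k : Fin T, P k o i * D k i h w) ^ 2)
        = ∑ i : Fin n_i,
            ∑ k ∈ Finset.univ.filter (fun k : Fin (M i).rank => T ≤ (k : ℕ)),
              (σ i k) ^ 2 :=
  dw_pw_truncated_svd_error_general n_o n_i k_h k_w W M hM σ u v hu hv hSVD T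
end
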